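/- (Two pairs of orthogonal qubit states.) Let |ψ_1⟩, |ψ_2⟩, |ψ_3⟩, |ψ_4⟩ be unit vectors in ℂ² with ⟨ψ_1|ψ_3⟩ = 0 and ⟨ψ_2|ψ_4⟩ = 0, and let ρ_x = |ψ_x⟩⟨ψ_x|. Then the guessing probability for ρ_1, ρ_2, ρ_3, ρ_4 with uniform prior probabilities 1/4 equals 1/2; equivalently, every such set of two orthogonal pairs has symmetry operator K = I/2 and lies in the same equivalence class of the minimum-error discrimination problem. -/

import Mathlib

/-!
Each `ρ_x = |ψ_x⟩⟨ψ_x|` is a rank-one projection, so `ρ_x ≤ I` and `K = I/4` dominates every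
`ρ_x/4`. For any POVM this gives `∑ tr(M_x ρ_x)/4 ≤ ∑ tr(M_x K) = tr K = 1/2`. The bound is
attained by measuring in the orthonormal basis `{ψ₁, ψ₃}`, which identifies `ρ₁` and `ρ₃` with
certainty and never guesses `ρ₂` or `ρ₄`.
-/

open BigOperators Matrix
open scoped ComplexOrder

def IsPOVM {d N : ℕ} (M : Fin N → Matrix (Fin d) (Fin d) ℂ) : Prop :=
  (∀ x, (M x).PosSemidef) ∧ ∑ x, M x = 1

namespace Matrix

variable {n : Type*} [Fintype n]

theorem isStarProjection_vecMulVec_star {R : Type*} [CommSemiring R] [StarRing R] {u : n → R}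
    (hu : star u ⬝ᵥ u = 1) : IsStarProjection (vecMulVec u (star u)) where
  isIdempotentElem := by
    rw [IsIdempotentElem, vecMulVec_mul_vecMulVec, hu, one_smul]
  isSelfAdjoint := by
    rw [IsSelfAdjoint, star_eq_conjTranspose, conjTranspose_vecMulVec, star_star]

theorem trace_vecMulVec_star_mul_self {R : Type*} [CommSemiring R] [StarRing R] {u : n → R}
    (hu : star u ⬝ᵥ u = 1) : (vecMulVec u (star u) * vecMulVec u (star u)).trace = 1 := by
  rw [(isStarProjection_vecMulVec_star hu).isIdempotentElem.eq, trace_vecMulVec, dotProduct_comm,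
    hu]

open scoped MatrixOrder in
theorem posSemidef_one_sub_vecMulVec_star [DecidableEq n] {𝕜 : Type*} [RCLike 𝕜] {u : n → 𝕜}
    (hu : star u ⬝ᵥ u = 1) : (1 - vecMulVec u (star u)).PosSemidef :=
  (isStarProjection_vecMulVec_star hu).one_sub.nonneg.posSemidef

theorem sum_vecMulVec_star_eq_one [DecidableEq n] {R : Type*} [CommRing R] [StarRing R]
    (b : n → n → R) (hb : ∀ i j, star (b i) ⬝ᵥ b j = if i = j then 1 else 0) :
    ∑ i, vecMulVec (b i) (star (b i)) = 1 := by
  set U : Matrix n n R := (of b)ᵀ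
  have hU : Uᴴ * U = 1 := by
    ext i j
    simpa [U, mul_apply, dotProduct, one_apply] using hb i j
  rw [← mul_eq_one_comm.mp hU]
  ext i j
  simp [U, sum_apply, mul_apply, vecMulVec_apply]

theorem vecMulVec_star_add_vecMulVec_star_eq_one {R : Type*} [CommRing R] [StarRing R]
    {u v : Fin 2 → R} (hu : star u ⬝ᵥ u = 1) (hv : star v ⬝ᵥ v = 1) (huv : star u ⬝ᵥ v = 0) :
    vecMulVec u (star u) + vecMulVec v (star v) = 1 := by
  have hvu : star v ⬝ᵥ u = 0 := by rw [star_dotProduct, huv, star_zero]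
  simpa using sum_vecMulVec_star_eq_one ![u, v] fun i j => by
    fin_cases i <;> fin_cases j <;> simp [hu, hv, huv, hvu]

open scoped MatrixOrder in
theorem PosSemidef.trace_mul_nonneg [DecidableEq n] {𝕜 : Type*} [RCLike 𝕜]
    {A B : Matrix n n 𝕜} (hA : A.PosSemidef) (hB : B.PosSemidef) : 0 ≤ (A * B).trace := by
  set S := CFC.sqrt B
  have hS : Sᴴ = S := (CFC.sqrt_nonneg B).isSelfAdjoint
  calc (0 : 𝕜) ≤ (Sᴴ * A * S).trace := (hA.conjTranspose_mul_mul_same S).trace_nonneg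
    _ = (A * B).trace := by
      rw [hS, trace_mul_cycle, CFC.sqrt_mul_sqrt_self B hB.nonneg, trace_mul_comm]

end Matrix

theorem IsPOVM.sum_re_trace_mul_le {d N : ℕ} {M : Fin N → Matrix (Fin d) (Fin d) ℂ}
    (hM : IsPOVM M) (q : Fin N → ℝ) (ρ : Fin N → Matrix (Fin d) (Fin d) ℂ)
    (K : Matrix (Fin d) (Fin d) ℂ) (hK : ∀ x, (K - (q x : ℂ) • ρ x).PosSemidef) :
    ∑ x, q x * (M x * ρ x).trace.re ≤ K.trace.re := by
  have hterm : ∀ x, q x * (M x * ρ x).trace.re ≤ (M x * K).trace.re := fun x => by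
    have hgap := Complex.nonneg_iff.mp ((hM.1 x).trace_mul_nonneg (hK x)) |>.1
    simp only [mul_sub, trace_sub, mul_smul_comm, trace_smul, Complex.sub_re, smul_eq_mul,
      Complex.re_ofReal_mul] at hgap
    linarith
  calc ∑ x, q x * (M x * ρ x).trace.re ≤ ∑ x, (M x * K).trace.re :=
        Finset.sum_le_sum fun x _ => hterm x
    _ = K.trace.re := by rw [← Complex.re_sum, ← trace_sum, ← Finset.sum_mul, hM.2, one_mul]

theorem two_orthogonal_pairs_guessing_probability_general
    (ψ : Fin 4 → (Fin 2 → ℂ))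
    (hunit : ∀ x, dotProduct (star (ψ x)) (ψ x) = 1)
    (horth13 : dotProduct (star (ψ 0)) (ψ 2) = 0) :
    IsGreatest {v : ℝ | ∃ M : Fin 4 → Matrix (Fin 2) (Fin 2) ℂ, IsPOVM M ∧
        v = ∑ x : Fin 4, (1 / 4 : ℝ) *
          ((M x * Matrix.vecMulVec (ψ x) (star (ψ x))).trace).re}
      (1 / 2) ∧
    (∀ x : Fin 4,
      ((1 / 2 : ℂ) • (1 : Matrix (Fin 2) (Fin 2) ℂ)
        - (1 / 4 : ℂ) • Matrix.vecMulVec (ψ x) (star (ψ x))).PosSemidef) := by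
  have hquarter : (0 : ℂ) ≤ 1 / 4 := by norm_num [Complex.le_def]
  have hK : ∀ x, ((1 / 4 : ℂ) • 1 - (1 / 4 : ℂ) • vecMulVec (ψ x) (star (ψ x))).PosSemidef :=
    fun x => by
      rw [← smul_sub]
      exact (posSemidef_one_sub_vecMulVec_star (hunit x)).smul hquarter
  refine ⟨⟨⟨![vecMulVec (ψ 0) (star (ψ 0)), 0, vecMulVec (ψ 2) (star (ψ 2)), 0], ⟨?_, ?_⟩, ?_⟩,
    ?_⟩, fun x => ?_⟩
  · intro x
    fin_cases x
    exacts [posSemidef_vecMulVec_self_star _, .zero, posSemidef_vecMulVec_self_star _, .zero]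
  · simpa [Fin.sum_univ_four] using
      vecMulVec_star_add_vecMulVec_star_eq_one (hunit 0) (hunit 2) horth13
  · norm_num [Fin.sum_univ_four, trace_vecMulVec_star_mul_self, hunit, cons_val_two,
      cons_val_three]
  · rintro v ⟨M, hM, rfl⟩
    have hbound := hM.sum_re_trace_mul_le (fun _ => 1 / 4) _ ((1 / 4 : ℂ) • 1) (by simpa using hK)
    norm_num [trace_one] at hbound ⊢
    exact hbound
  · convert (hK x).add (PosSemidef.one.smul hquarter) using 1
    rw [sub_add_eq_add_sub, ← add_smul]
    norm_num

/-- two pairs of orthogonal qubit states: for unit vectors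
`ψ₁, ψ₂, ψ₃, ψ₄ ∈ ℂ²` with `⟨ψ₁|ψ₃⟩ = 0` and `⟨ψ₂|ψ₄⟩ = 0`, the guessing probability
for the four pure states `ρ_x = |ψ_x⟩⟨ψ_x|` with uniform priors `1/4` equals `1/2`;
moreover `K = I/2` is a symmetry operator: `K ⪰ (1/4) ρ_x` for all `x` and
`tr K = 1/2` is the guessing probability. -/
theorem two_orthogonal_pairs_guessing_probability
    (ψ : Fin 4 → (Fin 2 → ℂ))
    (hunit : ∀ x, dotProduct (star (ψ x)) (ψ x) = 1)
    (horth13 : dotProduct (star (ψ 0)) (ψ 2) = 0)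
    (horth24 : dotProduct (star (ψ 1)) (ψ 3) = 0) :
    IsGreatest {v : ℝ | ∃ M : Fin 4 → Matrix (Fin 2) (Fin 2) ℂ, IsPOVM M ∧
        v = ∑ x : Fin 4, (1 / 4 : ℝ) *
          ((M x * Matrix.vecMulVec (ψ x) (star (ψ x))).trace).re}
      (1 / 2) ∧
    (∀ x : Fin 4,
      ((1 / 2 : ℂ) • (1 : Matrix (Fin 2) (Fin 2) ℂ)
        - (1 / 4 : ℂ) • Matrix.vecMulVec (ψ x) (star (ψ x))).PosSemidef) :=
  two_orthogonal_pairs_guessing_probability_general ψ hunit horth13
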